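/- Let f_n, f : ℝ → ℝ be continuous functions such that f_n → f uniformly on compact subsets of ℝ, and suppose that for every a > 0, sup_{n ≥ 1, x ∈ ℝ} ( max(f_n(x), f(x)) − a x² ) < ∞, and that inf_n f_n(0) > −∞. Then for every a > 0, lim_{n→∞} sup_{x ∈ ℝ} ( f_n(x) − a x² ) = sup_{x ∈ ℝ} ( f(x) − a x² ). -/

import Mathlib

/-!
Uniform domination at rate `a / 2`, together with the lower bound on `f n 0` (which passes to
`g 0`), confines the suprema of `f n x - a x²` and of `g x - a x²` to one compact set `K`: outside
`K` the penalty `a / 2 · x²` already exceeds the gap between the domination constant and that lower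
bound. On `K` the convergence is uniform, and the supremum is `1`-Lipschitz for the uniform distance.
-/

open Filter Set Topology

theorem tendsto_iSup_of_tendstoUniformly {ι α : Type*} [Nonempty α] {l : Filter ι}
    {F : ι → α → ℝ} {G : α → ℝ} (hG : BddAbove (range G)) (hFG : TendstoUniformly F G l) :
    Tendsto (fun i => ⨆ x, F i x) l (𝓝 (⨆ x, G x)) := by
  rw [Metric.tendsto_nhds]
  intro ε hε
  filter_upwards [Metric.tendstoUniformly_iff.mp hFG (ε / 2) (half_pos hε)] with i hi
  have hclose : ∀ x, G x - F i x < ε / 2 ∧ F i x - G x < ε / 2 := fun x =>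
    abs_sub_lt_iff.mp (Real.dist_eq (G x) (F i x) ▸ hi x)
  have hF : ∀ x, F i x ≤ (⨆ x, G x) + ε / 2 := fun x => by
    linarith [(hclose x).2, le_ciSup hG x]
  have hFbdd : BddAbove (range (F i)) := ⟨_, forall_mem_range.2 hF⟩
  have hG_le : ∀ x, G x ≤ (⨆ x, F i x) + ε / 2 := fun x => by
    linarith [(hclose x).1, le_ciSup hFbdd x]
  have upper := ciSup_le hF
  have lower := ciSup_le hG_le
  rw [Real.dist_eq, abs_sub_lt_iff]
  constructor <;> linarith

theorem Continuous.iSup_eq_iSup_subtype_of_le {α : Type*} [TopologicalSpace α] {φ : α → ℝ}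
    (hφ : Continuous φ) {K : Set α} (hK : IsCompact K) {x₀ : α} (h₀ : x₀ ∈ K)
    (hle : ∀ x ∉ K, φ x ≤ φ x₀) :
    ⨆ x, φ x = ⨆ x : K, φ x := by
  have : Nonempty α := ⟨x₀⟩
  have : Nonempty K := ⟨⟨x₀, h₀⟩⟩
  have : CompactSpace K := isCompact_iff_compactSpace.mp hK
  have hbddK : BddAbove (range fun x : K => φ x) := (isCompact_range (by fun_prop)).bddAbove
  have hK_le : ∀ x ∈ K, φ x ≤ ⨆ x : K, φ x := fun x hx => le_ciSup hbddK ⟨x, hx⟩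
  have hle_sup : ∀ x, φ x ≤ ⨆ x : K, φ x := fun x => by
    by_cases hx : x ∈ K
    · exact hK_le x hx
    · exact (hle x hx).trans (hK_le x₀ h₀)
  exact le_antisymm (ciSup_le hle_sup)
    (ciSup_le fun x => le_ciSup ⟨_, forall_mem_range.2 hle_sup⟩ _)

theorem eventually_le_mul_sq_cocompact {a : ℝ} (ha : 0 < a) (b : ℝ) :
    ∀ᶠ x in cocompact ℝ, b ≤ a * x ^ 2 := by
  have h := ((tendsto_pow_atTop two_ne_zero).comp
    (tendsto_norm_cocompact_atTop (E := ℝ))).const_mul_atTop ha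
  filter_upwards [h.eventually_ge_atTop b] with x hx
  simpa only [Function.comp_apply, Real.norm_eq_abs, sq_abs] using hx

theorem penalized_sup_converges
    (f : ℕ → ℝ → ℝ) (g : ℝ → ℝ)
    (hfc : ∀ n, Continuous (f n)) (hgc : Continuous g)
    (hunif : ∀ K : Set ℝ, IsCompact K → TendstoUniformlyOn f g atTop K)
    (hdom : ∀ a : ℝ, 0 < a → ∃ C : ℝ, ∀ n : ℕ, ∀ x : ℝ,
      max (f n x) (g x) - a * x^2 ≤ C)
    (hinf : ∃ m : ℝ, ∀ n : ℕ, m ≤ f n 0) :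
    ∀ a : ℝ, 0 < a →
      Tendsto (fun n => ⨆ x : ℝ, (f n x - a * x^2)) atTop
        (nhds (⨆ x : ℝ, (g x - a * x^2))) := by
  intro a ha
  obtain ⟨m, hm⟩ := hinf
  obtain ⟨C, hC⟩ := hdom (a / 2) (half_pos ha)
  have hg0 : m ≤ g 0 :=
    ge_of_tendsto ((hunif {0} isCompact_singleton).tendsto_at rfl) (Eventually.of_forall hm)
  obtain ⟨K₀, hK₀, hK₀c⟩ :=
    mem_cocompact.mp (eventually_le_mul_sq_cocompact (half_pos ha) (C - m))
  set K := insert 0 K₀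
  have hK : IsCompact K := hK₀.insert 0
  have localize : ∀ h : ℝ → ℝ, Continuous h → (∀ x, h x - a / 2 * x ^ 2 ≤ C) → m ≤ h 0 →
      ⨆ x, (h x - a * x ^ 2) = ⨆ x : K, (h x - a * x ^ 2) := by
    intro h hh hhC hhm
    refine Continuous.iSup_eq_iSup_subtype_of_le (φ := fun x => h x - a * x ^ 2) (by fun_prop) hK
      (mem_insert 0 K₀) fun x hx => ?_
    have hx : C - m ≤ a / 2 * x ^ 2 := hK₀c fun hxK => hx (mem_insert_of_mem 0 hxK)
    linarith [hhC x]
  rw [localize g hgc (fun x => (sub_le_sub_right (le_max_right _ _) _).trans (hC 0 x)) hg0]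
  simp_rw [localize _ (hfc _)
    (fun x => (sub_le_sub_right (le_max_left _ _) _).trans (hC _ x)) (hm _)]
  have : Nonempty K := ⟨⟨0, mem_insert 0 K₀⟩⟩
  have : CompactSpace K := isCompact_iff_compactSpace.mp hK
  have hbdd : BddAbove (range fun x : K => g x - a * x ^ 2) :=
    (isCompact_range (by fun_prop)).bddAbove
  exact tendsto_iSup_of_tendstoUniformly hbdd <|
    (tendstoUniformlyOn_iff_tendstoUniformly_comp_coe.mp (hunif K hK)).sub
      fun _ hu => Eventually.of_forall fun _ _ => refl_mem_uniformity hu
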